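/- Suppose $a_2 = a_1 - a_1^2$ and the generalized Dehn-filling hypotheses hold as above. Then for any reals $r,s$, $r\log(-m(\theta)) + s\log(-l(\theta)) = \frac{i(r + a_1 s)}{2(p + a_1 q)}\theta + \frac{i(2a_1 - 3a_1^2 + a_1^3 - a_3)(ps - qr)}{48(p+a_1 q)^4}\theta^3 + O(\theta^4)$; in particular the $\theta^2$ coefficient vanishes. -/

import Mathlib

open Filter Asymptotics Topology Complex

/-! Write `x = m + 1`. The Taylor series of `log (1 - ·)` and the relation
`l + 1 ≡ a₁ x + a₂ x² / 2 + a₃ x³ / 6` make `log (-m)` and `log (-l)` cubic polynomials in `x`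
modulo `θ⁴`, and when `a₂ = a₁ - a₁²` both have the shape `c (x + x² / 2) + d x³`. Eliminating
`x + x² / 2` between the combination with coefficients `r, s` and the relation
`p log (-m) + q log (-l) = iθ/2` leaves a multiple of `x³`, and that relation also gives
`x ≡ -iθ / (2 (p + a₁ q))` modulo `θ²`. -/

section PowerBounds

variable {α 𝕜 : Type*} [NormedField 𝕜] {l : Filter α} {g : α → 𝕜}

theorem pow_isBigO_pow_of_tendsto_zero (hg : Tendsto g l (𝓝 0)) {j k : ℕ} (hjk : j ≤ k) :
    (fun t => g t ^ k) =O[l] fun t => g t ^ j := by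
  rcases hjk.eq_or_lt with rfl | hlt
  · exact isBigO_refl _ _
  · exact ((isLittleO_pow_pow hlt).comp_tendsto hg).isBigO

theorem Asymptotics.IsBigO.pow_sub_pow {x w : α → 𝕜} {n : ℕ} (hx : x =O[l] g)
    (hw : w =O[l] g) (h : (fun t => x t - w t) =O[l] fun t => g t ^ n) (k : ℕ) :
    (fun t => x t ^ (k + 1) - w t ^ (k + 1)) =O[l] fun t => g t ^ (n + k) := by
  induction k with
  | zero => simpa using h
  | succ k ih =>
    have h₁ : (fun t => x t * (x t ^ (k + 1) - w t ^ (k + 1))) =O[l]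
        fun t => g t ^ (n + (k + 1)) :=
      (hx.mul ih).congr_right fun t => by ring
    have h₂ : (fun t => (x t - w t) * w t ^ (k + 1)) =O[l] fun t => g t ^ (n + (k + 1)) :=
      (h.mul (hw.pow (k + 1))).congr_right fun t => by ring
    exact (h₁.add h₂).congr_left fun t => by ring

theorem cube_sub_isBigO_of_linear {x : α → 𝕜} {b c : 𝕜} (hc : c ≠ 0) (hx : x =O[l] g)
    (h : (fun t => c * x t - b * g t) =O[l] fun t => g t ^ 2) :
    (fun t => x t ^ 3 - (b / c) ^ 3 * g t ^ 3) =O[l] fun t => g t ^ 4 := by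
  have hw : (fun t => b / c * g t) =O[l] g := (isBigO_refl g l).const_mul_left _
  have hxw : (fun t => x t - b / c * g t) =O[l] fun t => g t ^ 2 :=
    (h.const_mul_left c⁻¹).congr_left fun t => by field_simp
  exact (hx.pow_sub_pow hw hxw 2).congr_left fun t => by ring

end PowerBounds

theorem Complex.log_one_sub_add_cubic_isBigO :
    (fun z : ℂ => log (1 - z) + (z + z ^ 2 / 2 + z ^ 3 / 3)) =O[𝓝 0] fun z => z ^ 4 := by
  refine isBigO_iff.2 ⟨1, ?_⟩
  filter_upwards [Metric.ball_mem_nhds (0 : ℂ) one_half_pos] with z hz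
  rw [Metric.mem_ball, dist_zero_right] at hz
  have htaylor : logTaylor 4 (-z) = -(z + z ^ 2 / 2 + z ^ 3 / 3) := by
    simp [logTaylor, Finset.sum_range_succ]
    ring
  have hbound := norm_log_sub_logTaylor_le 3 (z := -z) (by rw [norm_neg]; linarith)
  rw [htaylor, norm_neg, ← sub_eq_add_neg, sub_neg_eq_add] at hbound
  have hinv : (1 - ‖z‖)⁻¹ ≤ 2 := by
    rw [inv_le_iff_one_le_mul₀ (by linarith)]
    linarith
  calc _ ≤ ‖z‖ ^ 4 * (1 - ‖z‖)⁻¹ / 4 := by exact_mod_cast hbound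
    _ ≤ 1 * ‖z ^ 4‖ := by
      rw [norm_pow]
      nlinarith [pow_nonneg (norm_nonneg z) 4]

section LogExpansion

variable {α : Type*} {l : Filter α} {g : α → ℂ}

theorem Asymptotics.IsBigO.log_one_sub_add_cubic_isBigO {x : α → ℂ} (hx : x =O[l] g)
    (hg : Tendsto g l (𝓝 0)) :
    (fun t => log (1 - x t) + (x t + x t ^ 2 / 2 + x t ^ 3 / 3)) =O[l] fun t => g t ^ 4 :=
  (Complex.log_one_sub_add_cubic_isBigO.comp_tendsto (hx.trans_tendsto hg)).trans (hx.pow 4)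

theorem log_one_sub_add_cubic_isBigO_of_sub_cubic {x y : α → ℂ} {a b c : ℂ} (hx : x =O[l] g)
    (hg : Tendsto g l (𝓝 0))
    (hy : (fun t => y t - (a * x t + b * x t ^ 2 + c * x t ^ 3)) =O[l] fun t => g t ^ 4) :
    (fun t => log (1 - y t) + (a * x t + (b + a ^ 2 / 2) * x t ^ 2 +
      (c + a * b + a ^ 3 / 3) * x t ^ 3)) =O[l] fun t => g t ^ 4 := by
  have hy3 : (fun t => y t - (a * x t + b * x t ^ 2)) =O[l] fun t => g t ^ 3 :=
    ((hy.trans (pow_isBigO_pow_of_tendsto_zero hg (by norm_num))).add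
      ((hx.pow 3).const_mul_left c)).congr_left fun t => by ring
  have hy2 : (fun t => y t - a * x t) =O[l] fun t => g t ^ 2 :=
    ((hy3.trans (pow_isBigO_pow_of_tendsto_zero hg (by norm_num))).add
      ((hx.pow 2).const_mul_left b)).congr_left fun t => by ring
  have hg21 : (fun t => g t ^ 2) =O[l] g :=
    (pow_isBigO_pow_of_tendsto_zero hg (by norm_num)).congr_right fun t => pow_one (g t)
  have hy1 : y =O[l] g :=
    ((hy2.trans hg21).add (hx.const_mul_left a)).congr_left fun t => by ring
  have hsq := hy1.pow_sub_pow
    ((hx.const_mul_left a).add (((hx.pow 2).trans hg21).const_mul_left b)) hy3 1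
  have hcube := hy1.pow_sub_pow (hx.const_mul_left a) hy2 2
  have hlog := hy1.log_one_sub_add_cubic_isBigO hg
  exact ((((hlog.sub hy).sub (hsq.const_mul_left (1 / 2))).sub
    (hcube.const_mul_left (1 / 3))).sub ((hx.pow 4).const_mul_left (b ^ 2 / 2))).congr_left
    fun t => by ring

end LogExpansion

theorem ofReal_add_mul_ofReal_ne_zero {a : ℂ} (ha : a.im ≠ 0) {p q : ℝ}
    (hpq : (p, q) ≠ (0, 0)) : (p : ℂ) + a * q ≠ 0 := by
  intro h
  have hq : q = 0 := by simpa [ha] using congrArg im h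
  have hp : p = 0 := by simpa [hq] using congrArg re h
  exact hpq (by rw [hp, hq])

theorem sub_linear_add_cubic_isBigO_of_cubic_relation {α : Type*} {l : Filter α}
    {g M x : α → ℂ} {c d c' d' e : ℂ} (hc : c ≠ 0) (hx : x =O[l] g) (hg : Tendsto g l (𝓝 0))
    (hL : (fun t => c * (x t + x t ^ 2 / 2) + d * x t ^ 3 + e * g t) =O[l] fun t => g t ^ 4)
    (hM : (fun t => M t + (c' * (x t + x t ^ 2 / 2) + d' * x t ^ 3)) =O[l] fun t => g t ^ 4) :
    (fun t => M t - (c' / c * e * g t + (c' * d - c * d') / c * (-e / c) ^ 3 * g t ^ 3))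
      =O[l] fun t => g t ^ 4 := by
  have hlin : (fun t => c * x t - -e * g t) =O[l] fun t => g t ^ 2 :=
    (((hL.trans (pow_isBigO_pow_of_tendsto_zero hg (by norm_num))).sub
      (((hx.pow 2).const_mul_left (c / 2)).add
        (((hx.pow 3).trans (pow_isBigO_pow_of_tendsto_zero hg (by norm_num))).const_mul_left d)))
      ).congr_left fun t => by ring
  have hcube := cube_sub_isBigO_of_linear hc hx hlin
  refine (((hM.sub (hL.const_mul_left (c' / c))).add
    (hcube.const_mul_left ((c' * d - c * d') / c))).congr_left fun t => ?_)
  field_simp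
  ring

theorem taylor_expansion_log_combination_general (a1 a2 a3 : ℂ) (ha1 : a1.im ≠ 0)
    (ha2 : a2 = a1 - a1 ^ 2)
    (p q : ℝ) (hpq : (p, q) ≠ (0, 0))
    (m l : ℂ → ℂ) (hm : AnalyticAt ℂ m 0)
    (hm0 : m 0 = -1)
    (hrel : (fun θ : ℂ => l θ - (-1 + a1 * (m θ + 1) + a2 / 2 * (m θ + 1) ^ 2 +
        a3 / 6 * (m θ + 1) ^ 3)) =O[nhds 0] fun θ : ℂ => (m θ + 1) ^ 4)
    (hdehn : ∀ᶠ θ : ℂ in nhds 0,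
      (p : ℂ) * Complex.log (-(m θ)) + (q : ℂ) * Complex.log (-(l θ)) =
        Complex.I * θ / 2) :
    ∀ r s : ℝ,
      (fun θ : ℂ => (r : ℂ) * Complex.log (-(m θ)) + (s : ℂ) * Complex.log (-(l θ)) -
          (Complex.I * ((r : ℂ) + a1 * s) / (2 * ((p : ℂ) + a1 * q)) * θ +
            Complex.I * (2 * a1 - 3 * a1 ^ 2 + a1 ^ 3 - a3) * ((p : ℂ) * s - (q : ℂ) * r) /
              (48 * ((p : ℂ) + a1 * q) ^ 4) * θ ^ 3))
        =O[nhds 0] fun θ : ℂ => θ ^ 4 := by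
  intro r s
  subst ha2
  have hc := ofReal_add_mul_ofReal_ne_zero ha1 hpq
  have hx : (fun θ => m θ + 1) =O[𝓝 0] fun θ => θ := by
    simpa [hm0] using hm.differentiableAt.isBigO_sub
  have hlogm := hx.log_one_sub_add_cubic_isBigO tendsto_id
  have hlogl := log_one_sub_add_cubic_isBigO_of_sub_cubic (a := a1) (b := (a1 - a1 ^ 2) / 2)
    (c := a3 / 6) (y := fun θ => l θ + 1) hx tendsto_id
    ((hrel.trans (hx.pow 4)).congr_left fun θ => by ring)
  simp only [sub_add_cancel_right] at hlogm hlogl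
  set K := a3 / 6 + a1 * ((a1 - a1 ^ 2) / 2) + a1 ^ 3 / 3
  have hcomb (u v : ℝ) : (fun θ => (u : ℂ) * log (-m θ) + v * log (-l θ) +
      ((u + a1 * v) * ((m θ + 1) + (m θ + 1) ^ 2 / 2) + (u / 3 + v * K) * (m θ + 1) ^ 3))
      =O[𝓝 0] fun θ => θ ^ 4 :=
    ((hlogm.const_mul_left u).add (hlogl.const_mul_left v)).congr_left fun θ => by ring
  have hdehn' : (fun θ => (p + a1 * q) * ((m θ + 1) + (m θ + 1) ^ 2 / 2) +
      (p / 3 + q * K) * (m θ + 1) ^ 3 + I / 2 * θ) =O[𝓝 0] fun θ => θ ^ 4 :=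
    (hcomb p q).congr' (hdehn.mono fun θ hθ => by linear_combination hθ) EventuallyEq.rfl
  refine (sub_linear_add_cubic_isBigO_of_cubic_relation hc hx tendsto_id hdehn'
    (hcomb r s)).congr_left fun θ => ?_
  have hI3 : (-(I / 2) / (p + a1 * q)) ^ 3 = I / (8 * (p + a1 * q) ^ 3) := by
    rw [div_pow, neg_pow, div_pow, I_pow_three]
    field_simp
    ring
  rw [hI3]
  field_simp
  ring

/-- When `a₂ = a₁ - a₁²`, for any reals `r, s`,
`r log(-m) + s log(-l) = i(r+a₁s)/(2(p+a₁q)) θ + i(2a₁-3a₁²+a₁³-a₃)(ps-qr)/(48(p+a₁q)⁴) θ³ + O(θ⁴)`;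
in particular the `θ²` coefficient vanishes. -/
theorem taylor_expansion_log_combination (a1 a2 a3 : ℂ) (ha1 : a1.im ≠ 0)
    (ha2 : a2 = a1 - a1 ^ 2)
    (p q : ℝ) (hpq : (p, q) ≠ (0, 0))
    (m l : ℂ → ℂ) (hm : AnalyticAt ℂ m 0) (hl : AnalyticAt ℂ l 0)
    (hm0 : m 0 = -1) (hl0 : l 0 = -1)
    (hrel : (fun θ : ℂ => l θ - (-1 + a1 * (m θ + 1) + a2 / 2 * (m θ + 1) ^ 2 +
        a3 / 6 * (m θ + 1) ^ 3)) =O[nhds 0] fun θ : ℂ => (m θ + 1) ^ 4)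
    (hdehn : ∀ᶠ θ : ℂ in nhds 0,
      (p : ℂ) * Complex.log (-(m θ)) + (q : ℂ) * Complex.log (-(l θ)) =
        Complex.I * θ / 2) :
    ∀ r s : ℝ,
      (fun θ : ℂ => (r : ℂ) * Complex.log (-(m θ)) + (s : ℂ) * Complex.log (-(l θ)) -
          (Complex.I * ((r : ℂ) + a1 * s) / (2 * ((p : ℂ) + a1 * q)) * θ +
            Complex.I * (2 * a1 - 3 * a1 ^ 2 + a1 ^ 3 - a3) * ((p : ℂ) * s - (q : ℂ) * r) /
              (48 * ((p : ℂ) + a1 * q) ^ 4) * θ ^ 3))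
        =O[nhds 0] fun θ : ℂ => θ ^ 4 :=
  taylor_expansion_log_combination_general a1 a2 a3 ha1 ha2 p q hpq m l hm hm0 hrel hdehn
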